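/- Suppose that for both i = 1 and i = 2 one has D^{(ii)}(x,y) < 0 for every x ≠ y in ℝ^d and K^{(ii)}(x,x) = K^{(ii)}(y,y) for all x,y ∈ ℝ^d, and that D^{(12)}(x,y) > 0 for every x ≠ y. Then every energy minimizer ρ_* is a pair of Dirac masses ρ_*^{(1)}(x_{ι_1}) = 1, ρ_*^{(2)}(x_{ι_2}) = 1 with ι_1 ≠ ι_2, i.e., the two species are aggregated at different vertices; moreover there exist at least two distinct energy minimizers, a second one being obtained from ρ_* by interchanging the aggregation vertices of the two species (species 1 at x_{ι_2}, species 2 at x_{ι_1}). -/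
import Mathlib


open Finset

/-- The nonlocal cross-interaction energy on a finite graph with vertices `x`,
vertex weights `μ`, kernels `K`, and two-species densities `ρ`. -/
noncomputable def energyGG {N d : ℕ} (x : Fin N → EuclideanSpace ℝ (Fin d)) (μ : Fin N → ℝ)
    (K : Fin 2 → Fin 2 → EuclideanSpace ℝ (Fin d) → EuclideanSpace ℝ (Fin d) → ℝ)
    (ρ : Fin 2 → Fin N → ℝ) : ℝ :=
  (1 / 2) * ∑ i : Fin 2, ∑ k : Fin 2, ∑ ι : Fin N, ∑ κ : Fin N,
    K i k (x ι) (x κ) * ρ i ι * ρ k κ * (μ ι * μ κ)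

/-- A two-species distribution: nonnegative densities with total mass one for each species. -/
def IsDistGG {N : ℕ} (μ : Fin N → ℝ) (ρ : Fin 2 → Fin N → ℝ) : Prop :=
  (∀ i ι, 0 ≤ ρ i ι) ∧ ∀ i, ∑ ι : Fin N, ρ i ι * μ ι = 1

/-- The two-species distribution with species 1 a Dirac at vertex `ι₂` and species 2 a
Dirac at vertex `ι₁` (densities `(μ ι)⁻¹` at those vertices). -/
noncomputable def swapDirac {N : ℕ} (μ : Fin N → ℝ) (ι₁ ι₂ : Fin N) :
    Fin 2 → Fin N → ℝ :=
  fun i ι => if i = 0 then (if ι = ι₂ then (μ ι)⁻¹ else 0)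
    else (if ι = ι₁ then (μ ι)⁻¹ else 0)

lemma shift_sum {N : ℕ} (A : Fin N → Fin N → ℝ) (t : ℝ) (m m' : Fin N → ℝ)
    (hm : ∑ ι, m ι = 1) (hm' : ∑ ι, m' ι = 1) :
    ∑ ι, ∑ κ, A ι κ * m ι * m' κ = t + ∑ ι, ∑ κ, (A ι κ - t) * m ι * m' κ := by
  have h3 : ∑ ι : Fin N, ∑ κ : Fin N, t * m ι * m' κ = t := by
    have h1 : ∀ ι : Fin N, ∑ κ : Fin N, t * m ι * m' κ = t * m ι := by
      intro ι
      rw [← Finset.mul_sum, hm', mul_one]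
    simp only [h1]
    rw [← Finset.mul_sum, hm, mul_one]
  have h2 : ∑ ι : Fin N, ∑ κ : Fin N, (A ι κ - t) * m ι * m' κ
      = (∑ ι : Fin N, ∑ κ : Fin N, A ι κ * m ι * m' κ)
        - ∑ ι : Fin N, ∑ κ : Fin N, t * m ι * m' κ := by
    rw [← Finset.sum_sub_distrib]
    apply Finset.sum_congr rfl; intro ι _
    rw [← Finset.sum_sub_distrib]
    apply Finset.sum_congr rfl; intro κ _
    ring
  rw [h2, h3]; ring

lemma double_sum_zero {N : ℕ} {F : Fin N → Fin N → ℝ} (hF : ∀ ι κ, 0 ≤ F ι κ)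
    (h : ∑ ι, ∑ κ, F ι κ = 0) : ∀ ι κ, F ι κ = 0 := by
  intro ι κ
  have h1 := (Finset.sum_eq_zero_iff_of_nonneg
    (fun ι _ => Finset.sum_nonneg fun κ _ => hF ι κ)).mp h ι (mem_univ ι)
  exact (Finset.sum_eq_zero_iff_of_nonneg (fun κ _ => hF ι κ)).mp h1 κ (mem_univ κ)

lemma energy_eq {N d : ℕ} (x : Fin N → EuclideanSpace ℝ (Fin d)) (μ : Fin N → ℝ)
    (K : Fin 2 → Fin 2 → EuclideanSpace ℝ (Fin d) → EuclideanSpace ℝ (Fin d) → ℝ)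
    (hKsym : ∀ i k p q, K i k p q = K i k q p)
    (hK12 : ∀ p q, K 0 1 p q = K 1 0 p q)
    (ρ : Fin 2 → Fin N → ℝ) :
    energyGG x μ K ρ = (1/2) *
      ((∑ ι, ∑ κ, K 0 0 (x ι) (x κ) * (ρ 0 ι * μ ι) * (ρ 0 κ * μ κ))
      + (∑ ι, ∑ κ, K 1 1 (x ι) (x κ) * (ρ 1 ι * μ ι) * (ρ 1 κ * μ κ))
      + 2 * ∑ ι, ∑ κ, K 0 1 (x ι) (x κ) * (ρ 0 ι * μ ι) * (ρ 1 κ * μ κ)) := by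
  have e : ∀ i k : Fin 2, ∑ ι : Fin N, ∑ κ : Fin N,
      K i k (x ι) (x κ) * ρ i ι * ρ k κ * (μ ι * μ κ)
      = ∑ ι : Fin N, ∑ κ : Fin N, K i k (x ι) (x κ) * (ρ i ι * μ ι) * (ρ k κ * μ κ) := by
    intro i k
    apply Finset.sum_congr rfl; intro ι _
    apply Finset.sum_congr rfl; intro κ _
    ring
  have h10 : ∑ ι : Fin N, ∑ κ : Fin N, K 1 0 (x ι) (x κ) * (ρ 1 ι * μ ι) * (ρ 0 κ * μ κ)
      = ∑ ι : Fin N, ∑ κ : Fin N, K 0 1 (x ι) (x κ) * (ρ 0 ι * μ ι) * (ρ 1 κ * μ κ) := by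
    rw [Finset.sum_comm]
    apply Finset.sum_congr rfl; intro κ _
    apply Finset.sum_congr rfl; intro ι _
    rw [← hK12, hKsym]
    ring
  unfold energyGG
  rw [Fin.sum_univ_two]
  simp only [Fin.sum_univ_two]
  rw [e 0 0, e 0 1, e 1 0, e 1 1, h10]
  ring

lemma Q_dirac {N : ℕ} (A : Fin N → Fin N → ℝ) (μ : Fin N → ℝ) (hμ : ∀ ι, μ ι ≠ 0)
    (a b : Fin N) :
    ∑ ι : Fin N, ∑ κ : Fin N, A ι κ * ((if ι = a then (μ ι)⁻¹ else 0) * μ ι)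
      * ((if κ = b then (μ κ)⁻¹ else 0) * μ κ) = A a b := by
  have h : ∀ (j ι : Fin N), (if ι = j then (μ ι)⁻¹ else 0) * μ ι = if ι = j then 1 else 0 := by
    intro j ι
    split <;> simp [inv_mul_cancel₀ (hμ ι)]
  simp only [h]
  simp [mul_ite, ite_mul, Finset.sum_ite_eq']

/-- Theorem 3.1 c), repulsive cross-interaction: under attractive self-interactions with
constant diagonals and `D^{(12)} > 0` off the diagonal, every energy minimizer is a pair of
Dirac masses at two *different* vertices, and interchanging the two aggregation vertices
yields a second, distinct, energy minimizer. -/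
theorem aggregation_pair_of_diracs_different_vertices
    (N d : ℕ) (hN : 2 ≤ N) (hd : 1 ≤ d)
    (x : Fin N → EuclideanSpace ℝ (Fin d)) (hx : Function.Injective x)
    (μ : Fin N → ℝ) (hμ : ∀ ι, 0 < μ ι)
    (K : Fin 2 → Fin 2 → EuclideanSpace ℝ (Fin d) → EuclideanSpace ℝ (Fin d) → ℝ)
    (hKcont : ∀ i k, Continuous fun p : EuclideanSpace ℝ (Fin d) × EuclideanSpace ℝ (Fin d) =>
      K i k p.1 p.2)
    (hKsym : ∀ i k p q, K i k p q = K i k q p)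
    (hK12 : ∀ p q, K 0 1 p q = K 1 0 p q)
    (hDii : ∀ i : Fin 2, ∀ p q : EuclideanSpace ℝ (Fin d), p ≠ q → K i i p p - K i i p q < 0)
    (hKdiag : ∀ i : Fin 2, ∀ p q : EuclideanSpace ℝ (Fin d), K i i p p = K i i q q)
    (hD12 : ∀ p q : EuclideanSpace ℝ (Fin d), p ≠ q → 0 < K 0 1 p p - K 0 1 p q)
    (ρs : Fin 2 → Fin N → ℝ)
    (hρs : IsDistGG μ ρs)
    (hmin : ∀ ρ, IsDistGG μ ρ → energyGG x μ K ρs ≤ energyGG x μ K ρ) :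
    ∃ ι₁ ι₂ : Fin N, ι₁ ≠ ι₂ ∧
      ρs 0 ι₁ * μ ι₁ = 1 ∧ ρs 1 ι₂ * μ ι₂ = 1 ∧
      (∀ ι, ι ≠ ι₁ → ρs 0 ι = 0) ∧ (∀ ι, ι ≠ ι₂ → ρs 1 ι = 0) ∧
      IsDistGG μ (swapDirac μ ι₁ ι₂) ∧
      (∀ ρ, IsDistGG μ ρ → energyGG x μ K (swapDirac μ ι₁ ι₂) ≤ energyGG x μ K ρ) ∧
      swapDirac μ ι₁ ι₂ ≠ ρs := by
  have hN0 : 0 < N := by omega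
  have hne : Nonempty (Fin N) := ⟨⟨0, hN0⟩⟩
  have hxne : ∀ {ι κ : Fin N}, ι ≠ κ → x ι ≠ x κ := fun h hc => h (hx hc)
  have hμ' : ∀ ι, μ ι ≠ 0 := fun ι => (hμ ι).ne'
  have hexne : ∀ a : Fin N, ∃ b, b ≠ a := by
    intro a
    apply Fintype.exists_ne_of_one_lt_card
    simpa using by omega
  -- argmin of the cross kernel
  obtain ⟨p, -, hp⟩ := Finset.exists_min_image (univ : Finset (Fin N × Fin N))
    (fun q => K 0 1 (x q.1) (x q.2)) univ_nonempty
  have hpmin : ∀ ι κ : Fin N, K 0 1 (x p.1) (x p.2) ≤ K 0 1 (x ι) (x κ) :=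
    fun ι κ => hp (ι, κ) (mem_univ _)
  set kmin := K 0 1 (x p.1) (x p.2) with hkmin
  set c0 := K 0 0 (x p.1) (x p.1) with hc0def
  set c1 := K 1 1 (x p.1) (x p.1) with hc1def
  have hc0 : ∀ ι, K 0 0 (x ι) (x ι) = c0 := fun ι => hKdiag 0 (x ι) (x p.1)
  have hc1 : ∀ ι, K 1 1 (x ι) (x ι) = c1 := fun ι => hKdiag 1 (x ι) (x p.1)
  set Emin := (1/2 : ℝ) * (c0 + c1 + 2 * kmin) with hEmin
  -- pointwise bounds
  have hoffs0 : ∀ ι κ : Fin N, ι ≠ κ → 0 < K 0 0 (x ι) (x κ) - c0 := by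
    intro ι κ h
    have h1 := hDii 0 (x ι) (x κ) (hxne h)
    have h2 := hc0 ι
    linarith
  have hoffs1 : ∀ ι κ : Fin N, ι ≠ κ → 0 < K 1 1 (x ι) (x κ) - c1 := by
    intro ι κ h
    have h1 := hDii 1 (x ι) (x κ) (hxne h)
    have h2 := hc1 ι
    linarith
  have hoff0 : ∀ ι κ : Fin N, 0 ≤ K 0 0 (x ι) (x κ) - c0 := by
    intro ι κ
    rcases eq_or_ne ι κ with h | h
    · rw [h, hc0 κ]; simp
    · exact (hoffs0 ι κ h).le
  have hoff1 : ∀ ι κ : Fin N, 0 ≤ K 1 1 (x ι) (x κ) - c1 := by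
    intro ι κ
    rcases eq_or_ne ι κ with h | h
    · rw [h, hc1 κ]; simp
    · exact (hoffs1 ι κ h).le
  have hoff01 : ∀ ι κ : Fin N, 0 ≤ K 0 1 (x ι) (x κ) - kmin := by
    intro ι κ
    have := hpmin ι κ
    linarith
  have hnnρ : ∀ (ρ : Fin 2 → Fin N → ℝ), IsDistGG μ ρ → ∀ i ι, 0 ≤ ρ i ι * μ ι :=
    fun ρ hρ i ι => mul_nonneg (hρ.1 i ι) (hμ ι).le
  -- energy decomposition
  have decomp : ∀ ρ : Fin 2 → Fin N → ℝ, IsDistGG μ ρ →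
      energyGG x μ K ρ = Emin + (1/2) *
        ((∑ ι, ∑ κ, (K 0 0 (x ι) (x κ) - c0) * (ρ 0 ι * μ ι) * (ρ 0 κ * μ κ))
        + (∑ ι, ∑ κ, (K 1 1 (x ι) (x κ) - c1) * (ρ 1 ι * μ ι) * (ρ 1 κ * μ κ))
        + 2 * ∑ ι, ∑ κ, (K 0 1 (x ι) (x κ) - kmin) * (ρ 0 ι * μ ι) * (ρ 1 κ * μ κ)) := by
    intro ρ hρ
    rw [energy_eq x μ K hKsym hK12 ρ]
    have e0 : (∑ ι, ∑ κ, K 0 0 (x ι) (x κ) * (ρ 0 ι * μ ι) * (ρ 0 κ * μ κ))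
        = c0 + ∑ ι, ∑ κ, (K 0 0 (x ι) (x κ) - c0) * (ρ 0 ι * μ ι) * (ρ 0 κ * μ κ) :=
      shift_sum (fun ι κ => K 0 0 (x ι) (x κ)) c0 _ _ (hρ.2 0) (hρ.2 0)
    have e1 : (∑ ι, ∑ κ, K 1 1 (x ι) (x κ) * (ρ 1 ι * μ ι) * (ρ 1 κ * μ κ))
        = c1 + ∑ ι, ∑ κ, (K 1 1 (x ι) (x κ) - c1) * (ρ 1 ι * μ ι) * (ρ 1 κ * μ κ) :=
      shift_sum (fun ι κ => K 1 1 (x ι) (x κ)) c1 _ _ (hρ.2 1) (hρ.2 1)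
    have e01 : (∑ ι, ∑ κ, K 0 1 (x ι) (x κ) * (ρ 0 ι * μ ι) * (ρ 1 κ * μ κ))
        = kmin + ∑ ι, ∑ κ, (K 0 1 (x ι) (x κ) - kmin) * (ρ 0 ι * μ ι) * (ρ 1 κ * μ κ) :=
      shift_sum (fun ι κ => K 0 1 (x ι) (x κ)) kmin _ _ (hρ.2 0) (hρ.2 1)
    rw [e0, e1, e01, hEmin]
    ring
  -- nonnegativity of the three remainder sums
  have R0nn : ∀ ρ, IsDistGG μ ρ →
      0 ≤ ∑ ι, ∑ κ, (K 0 0 (x ι) (x κ) - c0) * (ρ 0 ι * μ ι) * (ρ 0 κ * μ κ) := by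
    intro ρ hρ
    exact Finset.sum_nonneg fun ι _ => Finset.sum_nonneg fun κ _ =>
      mul_nonneg (mul_nonneg (hoff0 ι κ) (hnnρ ρ hρ 0 ι)) (hnnρ ρ hρ 0 κ)
  have R1nn : ∀ ρ, IsDistGG μ ρ →
      0 ≤ ∑ ι, ∑ κ, (K 1 1 (x ι) (x κ) - c1) * (ρ 1 ι * μ ι) * (ρ 1 κ * μ κ) := by
    intro ρ hρ
    exact Finset.sum_nonneg fun ι _ => Finset.sum_nonneg fun κ _ =>
      mul_nonneg (mul_nonneg (hoff1 ι κ) (hnnρ ρ hρ 1 ι)) (hnnρ ρ hρ 1 κ)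
  have R01nn : ∀ ρ, IsDistGG μ ρ →
      0 ≤ ∑ ι, ∑ κ, (K 0 1 (x ι) (x κ) - kmin) * (ρ 0 ι * μ ι) * (ρ 1 κ * μ κ) := by
    intro ρ hρ
    exact Finset.sum_nonneg fun ι _ => Finset.sum_nonneg fun κ _ =>
      mul_nonneg (mul_nonneg (hoff01 ι κ) (hnnρ ρ hρ 0 ι)) (hnnρ ρ hρ 1 κ)
  have lower : ∀ ρ, IsDistGG μ ρ → Emin ≤ energyGG x μ K ρ := by
    intro ρ hρ
    rw [decomp ρ hρ]
    have := R0nn ρ hρ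
    have := R1nn ρ hρ
    have := R01nn ρ hρ
    linarith
  -- swapDirac facts
  have hsd0 : ∀ (a b ι : Fin N), swapDirac μ a b 0 ι = (if ι = b then (μ ι)⁻¹ else 0) := by
    intro a b ι; simp [swapDirac]
  have hsd1 : ∀ (a b ι : Fin N), swapDirac μ a b 1 ι = (if ι = a then (μ ι)⁻¹ else 0) := by
    intro a b ι; simp [swapDirac]
  have hmass : ∀ (j ι : Fin N), (if ι = j then (μ ι)⁻¹ else 0) * μ ι = if ι = j then 1 else 0 := by
    intro j ι
    split <;> simp [inv_mul_cancel₀ (hμ' ι)]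
  have h2cases : ∀ j : Fin 2, j = 0 ∨ j = 1 := by decide
  have hdist : ∀ a b : Fin N, IsDistGG μ (swapDirac μ a b) := by
    intro a b
    constructor
    · intro i ι
      unfold swapDirac
      split <;> split <;> simp [inv_nonneg, (hμ ι).le]
    · intro i
      rcases h2cases i with rfl | rfl
      · simp only [hsd0, hmass, Finset.sum_ite_eq', mem_univ, if_true]
      · simp only [hsd1, hmass, Finset.sum_ite_eq', mem_univ, if_true]
  have hE : ∀ a b : Fin N, energyGG x μ K (swapDirac μ a b)
      = (1/2) * (K 0 0 (x b) (x b) + K 1 1 (x a) (x a) + 2 * K 0 1 (x b) (x a)) := by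
    intro a b
    rw [energy_eq x μ K hKsym hK12]
    simp only [hsd0, hsd1]
    rw [Q_dirac (fun ι κ => K 0 0 (x ι) (x κ)) μ hμ' b b,
      Q_dirac (fun ι κ => K 1 1 (x ι) (x κ)) μ hμ' a a,
      Q_dirac (fun ι κ => K 0 1 (x ι) (x κ)) μ hμ' b a]
  -- energy of the optimal Dirac pair
  have hEδ : energyGG x μ K (swapDirac μ p.2 p.1) = Emin := by
    rw [hE p.2 p.1, hc0 p.1, hc1 p.2, ← hkmin, hEmin]
  have hEρs : energyGG x μ K ρs = Emin :=
    le_antisymm (hEδ ▸ hmin _ (hdist p.2 p.1)) (lower ρs hρs)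
  -- extract the vanishing of all three remainders
  have hdec := decomp ρs hρs
  rw [hEρs] at hdec
  have hzero :
      (∑ ι, ∑ κ, (K 0 0 (x ι) (x κ) - c0) * (ρs 0 ι * μ ι) * (ρs 0 κ * μ κ)) = 0 ∧
      (∑ ι, ∑ κ, (K 1 1 (x ι) (x κ) - c1) * (ρs 1 ι * μ ι) * (ρs 1 κ * μ κ)) = 0 ∧
      (∑ ι, ∑ κ, (K 0 1 (x ι) (x κ) - kmin) * (ρs 0 ι * μ ι) * (ρs 1 κ * μ κ)) = 0 := by
    have := R0nn ρs hρs
    have := R1nn ρs hρs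
    have := R01nn ρs hρs
    refine ⟨by linarith, by linarith, by linarith⟩
  have z0 : ∀ ι κ, (K 0 0 (x ι) (x κ) - c0) * (ρs 0 ι * μ ι) * (ρs 0 κ * μ κ) = 0 :=
    double_sum_zero (fun ι κ =>
      mul_nonneg (mul_nonneg (hoff0 ι κ) (hnnρ ρs hρs 0 ι)) (hnnρ ρs hρs 0 κ)) hzero.1
  have z1 : ∀ ι κ, (K 1 1 (x ι) (x κ) - c1) * (ρs 1 ι * μ ι) * (ρs 1 κ * μ κ) = 0 :=
    double_sum_zero (fun ι κ =>
      mul_nonneg (mul_nonneg (hoff1 ι κ) (hnnρ ρs hρs 1 ι)) (hnnρ ρs hρs 1 κ)) hzero.2.1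
  have z01 : ∀ ι κ, (K 0 1 (x ι) (x κ) - kmin) * (ρs 0 ι * μ ι) * (ρs 1 κ * μ κ) = 0 :=
    double_sum_zero (fun ι κ =>
      mul_nonneg (mul_nonneg (hoff01 ι κ) (hnnρ ρs hρs 0 ι)) (hnnρ ρs hρs 1 κ)) hzero.2.2
  -- the support of species 0 is a single vertex ι₁
  obtain ⟨ι₁, -, hι₁⟩ := Finset.exists_ne_zero_of_sum_ne_zero
    (by rw [hρs.2 0]; norm_num : (∑ ι : Fin N, ρs 0 ι * μ ι) ≠ 0)
  have hz0' : ∀ ι, ι ≠ ι₁ → ρs 0 ι * μ ι = 0 := by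
    intro ι h
    have hprod := z0 ι ι₁
    have hpos := hoffs0 ι ι₁ h
    rcases mul_eq_zero.mp hprod with h' | h'
    · rcases mul_eq_zero.mp h' with h'' | h''
      · exact absurd h'' hpos.ne'
      · exact h''
    · exact absurd h' hι₁
  have hρ0 : ∀ ι, ι ≠ ι₁ → ρs 0 ι = 0 := fun ι h =>
    (mul_eq_zero.mp (hz0' ι h)).resolve_right (hμ' ι)
  have hmass1 : ρs 0 ι₁ * μ ι₁ = 1 := by
    have hs := Finset.sum_eq_single ι₁ (fun ι _ h => hz0' ι h)
      (fun h => absurd (mem_univ ι₁) h)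
    rw [← hs, hρs.2 0]
  -- the support of species 1 is a single vertex ι₂
  obtain ⟨ι₂, -, hι₂⟩ := Finset.exists_ne_zero_of_sum_ne_zero
    (by rw [hρs.2 1]; norm_num : (∑ ι : Fin N, ρs 1 ι * μ ι) ≠ 0)
  have hz1' : ∀ ι, ι ≠ ι₂ → ρs 1 ι * μ ι = 0 := by
    intro ι h
    have hprod := z1 ι ι₂
    have hpos := hoffs1 ι ι₂ h
    rcases mul_eq_zero.mp hprod with h' | h'
    · rcases mul_eq_zero.mp h' with h'' | h''
      · exact absurd h'' hpos.ne'
      · exact h''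
    · exact absurd h' hι₂
  have hρ1 : ∀ ι, ι ≠ ι₂ → ρs 1 ι = 0 := fun ι h =>
    (mul_eq_zero.mp (hz1' ι h)).resolve_right (hμ' ι)
  have hmass2 : ρs 1 ι₂ * μ ι₂ = 1 := by
    have hs := Finset.sum_eq_single ι₂ (fun ι _ h => hz1' ι h)
      (fun h => absurd (mem_univ ι₂) h)
    rw [← hs, hρs.2 1]
  -- the cross kernel is minimal at (ι₁, ι₂)
  have hk : K 0 1 (x ι₁) (x ι₂) = kmin := by
    have hprod := z01 ι₁ ι₂
    rw [hmass1, hmass2] at hprod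
    have : K 0 1 (x ι₁) (x ι₂) - kmin = 0 := by linarith [hprod]
    linarith
  -- the two vertices differ
  have hne12 : ι₁ ≠ ι₂ := by
    intro h
    obtain ⟨j, hj⟩ := hexne ι₁
    have h1 : 0 < K 0 1 (x ι₁) (x ι₁) - K 0 1 (x ι₁) (x j) :=
      hD12 _ _ (hxne (Ne.symm hj))
    have h2 : kmin ≤ K 0 1 (x ι₁) (x j) := hpmin ι₁ j
    rw [← h] at hk
    linarith
  refine ⟨ι₁, ι₂, hne12, hmass1, hmass2, hρ0, hρ1, hdist ι₁ ι₂, ?_, ?_⟩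
  · intro ρ hρ
    have hEs : energyGG x μ K (swapDirac μ ι₁ ι₂) = Emin := by
      rw [hE ι₁ ι₂, hc0 ι₂, hc1 ι₁, hKsym 0 1 (x ι₂) (x ι₁), hk, hEmin]
    rw [hEs]
    exact lower ρ hρ
  · intro hcontra
    have h1 : swapDirac μ ι₁ ι₂ 0 ι₂ = ρs 0 ι₂ := by rw [hcontra]
    rw [hsd0 ι₁ ι₂ ι₂, if_pos rfl, hρ0 ι₂ (Ne.symm hne12)] at h1
    exact (inv_ne_zero (hμ' ι₂)) h1
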